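/- Let $A$ be a Noetherian adic ring and $I_1 \supseteq I_2 \supseteq \cdots$ a descending chain of ideals of definition of $A$ (not necessarily a basis of neighborhoods of $0$), and let $B := \varprojlim A/I_i$ with the inverse limit topology. Suppose $B$ is adic. Then the natural map $A \to B$ is surjective, and the topology on $B$ is the $\{I_1^n B\}$-topology. -/

import Mathlib

open Filter Topology

/-- The descending chain `I` of ideals is a basis of neighborhoods of `0`
(this is the `{Iᵢ}`-topology). -/
def IsChainBasis (A : Type*) [CommRing A] [TopologicalSpace A] (I : ℕ → Ideal A) : Prop :=
  Antitone I ∧ ∀ s : Set A, s ∈ nhds (0 : A) ↔ ∃ i, (I i : Set A) ⊆ s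

/-- An ideal of definition: an open ideal all of whose elements are topologically nilpotent. -/
def IsIdealOfDefinition (A : Type*) [CommRing A] [TopologicalSpace A] (J : Ideal A) : Prop :=
  IsOpen (J : Set A) ∧ ∀ x ∈ J, Filter.Tendsto (fun n => x ^ n) Filter.atTop (nhds (0 : A))

/-- An admissible ring: a topological ring, linearly topologized with a countable chain of
ideals as a basis of neighborhoods of `0`, separated, complete, admitting an ideal of
definition. -/
structure IsAdmissible (A : Type*) [CommRing A] [TopologicalSpace A] : Prop where
  topRing : IsTopologicalRing A
  exists_chain : ∃ I : ℕ → Ideal A, IsChainBasis A I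
  separated : ∀ x : A, (∀ U ∈ nhds (0 : A), x ∈ U) → x = 0
  complete : ∀ f : ℕ → A,
    (∀ U ∈ nhds (0 : A), ∃ N, ∀ m ≥ N, ∀ n ≥ N, f m - f n ∈ U) →
    ∃ a : A, ∀ U ∈ nhds (0 : A), ∃ N, ∀ n ≥ N, a - f n ∈ U
  exists_idealOfDef : ∃ J : Ideal A, IsIdealOfDefinition A J

/-- The topology of `A` is the `J`-adic topology: the powers `J ^ n` form a basis of
neighborhoods of `0`. -/
def IsAdicTopology (A : Type*) [CommRing A] [TopologicalSpace A] (J : Ideal A) : Prop :=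
  ∀ s : Set A, s ∈ nhds (0 : A) ↔ ∃ n : ℕ, ((J ^ n : Ideal A) : Set A) ⊆ s

/-- The inverse limit `varprojlim A/Iᵢ` of the quotients along a descending chain of ideals,
realized as the subring of compatible families in `Π i, A ⧸ I i`. -/
def limSubring (A : Type*) [CommRing A] (I : ℕ → Ideal A) (hI : ∀ i, I (i + 1) ≤ I i) :
    Subring (∀ i, A ⧸ I i) where
  carrier := {g | ∀ i, Ideal.Quotient.factor (hI i) (g (i + 1)) = g i}
  zero_mem' := by intro i; simp
  one_mem' := by intro i; simp
  add_mem' := by intro a b ha hb; intro i; simp [map_add, ha i, hb i]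
  mul_mem' := by intro a b ha hb; intro i; simp [map_mul, ha i, hb i]
  neg_mem' := by intro a ha i; simp [map_neg, ha i]

/-- The inverse limit topology on `limSubring`, where each `A ⧸ I i` is discrete. -/
def limTopology (A : Type*) [CommRing A] (I : ℕ → Ideal A) (hI : ∀ i, I (i + 1) ≤ I i) :
    TopologicalSpace (limSubring A I hI) :=
  TopologicalSpace.induced Subtype.val
    (@Pi.topologicalSpace ℕ (fun i => A ⧸ I i) (fun _ => ⊥))

/-- The natural ring homomorphism `A → varprojlim A/Iᵢ`. -/
def toLim (A : Type*) [CommRing A] (I : ℕ → Ideal A) (hI : ∀ i, I (i + 1) ≤ I i) :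
    A →+* limSubring A I hI :=
  RingHom.codRestrict (Pi.ringHom fun i => Ideal.Quotient.mk (I i)) _
    (fun a i => Ideal.Quotient.factor_mk (hI i) a)

/-
Write `𝔞 = I₀`. In a Noetherian adic ring every ideal of definition is itself a defining ideal
of the topology, so `A` is `𝔞`-adically complete and each `Iᵢ` contains a power of `𝔞`. The
adic topology of `B` is then the `𝔟`-adic one for `𝔟 = ker (B → A/I_{N₀})` with `N₀` large,
and since `𝔟` is generated modulo each `ker (B → A/I_N)` by the image of `I_{N₀}`, this yields
a Mittag-Leffler type condition: for every `j` some `ker (B → A/I_M)` lies in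
`𝔞ʲB + ker (B → A/I_N)` for all `N`. Successive approximation in the complete ring `A` then
lifts every element of `ker (B → A/I_M)` to an element of `𝔞ʲ`, which gives both the
surjectivity of `A → B` and the inclusion `ker (B → A/I_M) ⊆ (𝔞B)ʲ`.
-/

theorem exists_seq_of_forall_exists_succ {α : Type*} {P : ℕ → α → Prop}
    {R : ℕ → α → α → Prop} {x₀ : α} (h₀ : P 0 x₀)
    (h : ∀ k x, P k x → ∃ y, P (k + 1) y ∧ R k x y) :
    ∃ f : ℕ → α, ∀ k, P k (f k) ∧ R k (f k) (f (k + 1)) := by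
  have h' : ∀ k x, ∃ y, P k x → P (k + 1) y ∧ R k x y := by
    intro k x
    by_cases hx : P k x
    · obtain ⟨y, hy⟩ := h k x hx
      exact ⟨y, fun _ => hy⟩
    · exact ⟨x, fun h => absurd h hx⟩
  choose g hg using h'
  let f : ℕ → α := fun k => Nat.rec (motive := fun _ => α) x₀ g k
  have hf : ∀ k, P k (f k) := fun k => by
    induction k with
    | zero => exact h₀
    | succ k ih => exact (hg k (f k) ih).1
  exact ⟨f, fun k => ⟨hf k, (hg k (f k) (hf k)).2⟩⟩

theorem smodEq_pow_smul_top_iff {R : Type*} [CommRing R] {J : Ideal R} {n : ℕ} {x y : R} :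
    x ≡ y [SMOD (J ^ n • ⊤ : Submodule R R)] ↔ x - y ∈ J ^ n := by
  rw [SModEq.sub_mem, smul_eq_mul, Ideal.mul_top]

section AdicTopology

variable {R : Type*} [CommRing R] [TopologicalSpace R] {J K : Ideal R}

theorem IsAdicTopology.pow_mem_nhds (hJ : IsAdicTopology R J) (n : ℕ) :
    ((J ^ n : Ideal R) : Set R) ∈ 𝓝 0 :=
  (hJ _).2 ⟨n, subset_rfl⟩

theorem IsAdicTopology.exists_pow_le (hJ : IsAdicTopology R J) (hK : (K : Set R) ∈ 𝓝 0) :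
    ∃ n, J ^ n ≤ K :=
  (hJ _).1 hK

theorem isAdicTopology_of_basis {b : ℕ → Ideal R}
    (hb : ∀ s : Set R, s ∈ 𝓝 0 ↔ ∃ N, (b N : Set R) ⊆ s)
    (hKb : ∀ N, ∃ n, K ^ n ≤ b N) (hbK : ∀ n, ∃ N, b N ≤ K ^ n) : IsAdicTopology R K := by
  intro s
  rw [hb]
  constructor
  · rintro ⟨N, hN⟩
    obtain ⟨n, hn⟩ := hKb N
    exact ⟨n, (SetLike.coe_subset_coe.2 hn).trans hN⟩
  · rintro ⟨n, hn⟩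
    obtain ⟨N, hN⟩ := hbK n
    exact ⟨N, (SetLike.coe_subset_coe.2 hN).trans hn⟩

theorem IsAdicTopology.of_mem_nhds (hJ : IsAdicTopology R J) (hK : (K : Set R) ∈ 𝓝 0)
    (hKJ : ∃ m, K ^ m ≤ J) : IsAdicTopology R K := by
  obtain ⟨m, hm⟩ := hKJ
  obtain ⟨m', hm'⟩ := hJ.exists_pow_le hK
  refine isAdicTopology_of_basis (b := (J ^ ·)) hJ (fun N => ⟨m * N, ?_⟩) (fun n => ⟨m' * n, ?_⟩)
  · rw [pow_mul]
    exact Ideal.pow_right_mono hm N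
  · rw [pow_mul]
    exact Ideal.pow_right_mono hm' n

theorem IsIdealOfDefinition.le_radical (hK : IsIdealOfDefinition R K) (hJ : IsAdicTopology R J) :
    K ≤ J.radical := fun x hx => by
  obtain ⟨n, hn⟩ := ((hK.2 x hx).eventually_mem (hJ.pow_mem_nhds 1)).exists
  exact ⟨n, by simpa using hn⟩

theorem IsIdealOfDefinition.isAdicTopology [IsNoetherianRing R] (hK : IsIdealOfDefinition R K)
    (hJ : IsAdicTopology R J) : IsAdicTopology R K :=
  hJ.of_mem_nhds (hK.1.mem_nhds K.zero_mem)
    (Ideal.exists_pow_le_of_le_radical_of_fg (hK.le_radical hJ) (IsNoetherian.noetherian K))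

theorem IsAdmissible.isPrecomplete (hR : IsAdmissible R) (hJ : IsAdicTopology R J) :
    IsPrecomplete J R := by
  refine ⟨fun f hf => ?_⟩
  obtain ⟨L, hL⟩ := hR.complete f fun U hU => by
    obtain ⟨k, hk⟩ := (hJ U).1 hU
    refine ⟨k, fun m hm n hn => hk ?_⟩
    simpa using sub_mem (smodEq_pow_smul_top_iff.1 (hf hm).symm)
      (smodEq_pow_smul_top_iff.1 (hf hn).symm)
  refine ⟨L, fun n => smodEq_pow_smul_top_iff.2 ?_⟩
  obtain ⟨N, hN⟩ := hL _ (hJ.pow_mem_nhds n)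
  simpa using sub_mem (smodEq_pow_smul_top_iff.1 (hf (le_max_right N n)))
    (hN _ (le_max_left N n))

end AdicTopology

section InverseLimit

variable {A : Type*} [CommRing A] {I : ℕ → Ideal A} (hI : ∀ i, I (i + 1) ≤ I i)

def limProj (N : ℕ) : limSubring A I hI →+* A ⧸ I N :=
  (Pi.evalRingHom _ N).comp (limSubring A I hI).subtype

@[simp]
theorem limProj_toLim (N : ℕ) (x : A) :
    limProj hI N (toLim A I hI x) = Ideal.Quotient.mk (I N) x :=
  rfl

theorem limProj_eq_of_le (b : limSubring A I hI) {i j : ℕ} (hij : i ≤ j) {x : A}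
    (hx : Ideal.Quotient.mk (I j) x = limProj hI j b) :
    Ideal.Quotient.mk (I i) x = limProj hI i b := by
  induction j, hij using Nat.le_induction with
  | base => exact hx
  | succ j _ ih =>
    apply ih
    rw [← Ideal.Quotient.factor_mk (hI j), hx]
    exact b.2 j

theorem ker_limProj_antitone : Antitone fun N => RingHom.ker (limProj hI N) :=
  fun i j hij b hb => by
    have h := limProj_eq_of_le hI b hij (x := 0) (by rw [map_zero, RingHom.mem_ker.1 hb])
    rw [RingHom.mem_ker, ← h, map_zero]

theorem eq_zero_of_forall_limProj_eq_zero {b : limSubring A I hI}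
    (hb : ∀ N, limProj hI N b = 0) : b = 0 :=
  Subtype.ext (funext hb)

theorem map_toLim_le_ker_limProj (N : ℕ) :
    Ideal.map (toLim A I hI) (I N) ≤ RingHom.ker (limProj hI N) :=
  Ideal.map_le_iff_le_comap.2 fun x hx => by
    rw [Ideal.mem_comap, RingHom.mem_ker, limProj_toLim, Ideal.Quotient.eq_zero_iff_mem]
    exact hx

theorem ker_limProj_le_map_sup {N₀ N : ℕ} (h : N₀ ≤ N) :
    RingHom.ker (limProj hI N₀) ≤
      Ideal.map (toLim A I hI) (I N₀) ⊔ RingHom.ker (limProj hI N) := fun b hb => by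
  obtain ⟨x, hx⟩ := Ideal.Quotient.mk_surjective (limProj hI N b)
  have hxI : x ∈ I N₀ := by
    rw [← Ideal.Quotient.eq_zero_iff_mem, limProj_eq_of_le hI b h hx]
    exact hb
  have hbx : toLim A I hI x - b ∈ RingHom.ker (limProj hI N) := by
    rw [RingHom.mem_ker, map_sub, limProj_toLim, hx, sub_self]
  simpa using Ideal.sub_mem _ (Ideal.mem_sup_left (Ideal.mem_map_of_mem (toLim A I hI) hxI))
    (Ideal.mem_sup_right hbx)

theorem exists_sub_mem_ker_of_mem_map_sup {K : Ideal A} {N : ℕ} {b : limSubring A I hI}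
    (hb : b ∈ Ideal.map (toLim A I hI) K ⊔ RingHom.ker (limProj hI N)) :
    ∃ a ∈ K, b - toLim A I hI a ∈ RingHom.ker (limProj hI N) := by
  obtain ⟨y, hy, z, hz, rfl⟩ := Submodule.mem_sup.1 hb
  have hmap : Ideal.map (limProj hI N) (Ideal.map (toLim A I hI) K) =
      Ideal.map (Ideal.Quotient.mk (I N)) K :=
    Ideal.map_map _ _
  obtain ⟨a, ha, hay⟩ := (Ideal.mem_map_iff_of_surjective _ Ideal.Quotient.mk_surjective).1
    (hmap ▸ Ideal.mem_map_of_mem (limProj hI N) hy)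
  refine ⟨a, ha, ?_⟩
  rw [RingHom.mem_ker] at hz ⊢
  rw [add_sub_right_comm, map_add, map_sub, limProj_toLim, hay, sub_self, hz, add_zero]

theorem limTopology_mem_nhds_zero_iff (s : Set (limSubring A I hI)) :
    s ∈ @nhds _ (limTopology A I hI) 0 ↔ ∃ N, (RingHom.ker (limProj hI N) : Set _) ⊆ s := by
  let _ (i : ℕ) : TopologicalSpace (A ⧸ I i) := ⊥
  have _ (i : ℕ) : DiscreteTopology (A ⧸ I i) := ⟨rfl⟩
  let _ : TopologicalSpace (limSubring A I hI) := limTopology A I hI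
  constructor
  · intro hs
    obtain ⟨u, hu, hus⟩ := (mem_nhds_induced Subtype.val 0 s).1 hs
    rw [nhds_pi, Filter.mem_pi] at hu
    obtain ⟨F, hF, t, ht, hFt⟩ := hu
    obtain ⟨N, hN⟩ := hF.bddAbove
    refine ⟨N, fun b hb => hus (hFt fun i hi => ?_)⟩
    have hbi : limProj hI i b = 0 := ker_limProj_antitone hI (hN hi) hb
    change limProj hI i b ∈ t i
    exact hbi ▸ mem_of_mem_nhds (ht i)
  · rintro ⟨N, hN⟩
    have hcont : Continuous (limProj hI N) := (continuous_apply N).comp continuous_subtype_val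
    exact Filter.mem_of_superset
      ((isOpen_discrete {0}).preimage hcont |>.mem_nhds (map_zero _)) hN

theorem exists_ker_limProj_le {K : Ideal (limSubring A I hI)}
    (hK : (K : Set (limSubring A I hI)) ∈ @nhds _ (limTopology A I hI) 0) :
    ∃ N, RingHom.ker (limProj hI N) ≤ K :=
  (limTopology_mem_nhds_zero_iff hI _).1 hK

theorem exists_ker_limProj_le_map_pow_sup [TopologicalSpace A] [IsNoetherianRing A]
    {𝔞 : Ideal A} (h𝔞 : IsAdicTopology A 𝔞) (hdef : ∀ i, IsIdealOfDefinition A (I i))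
    {JB : Ideal (limSubring A I hI)} (hJB : @IsAdicTopology _ _ (limTopology A I hI) JB)
    (j : ℕ) : ∃ M, ∀ N, RingHom.ker (limProj hI M) ≤
      Ideal.map (toLim A I hI) (𝔞 ^ j) ⊔ RingHom.ker (limProj hI N) := by
  let _ := limTopology A I hI
  obtain ⟨N₀, hN₀⟩ := exists_ker_limProj_le hI (hJB.pow_mem_nhds 1)
  have hB : IsAdicTopology _ (RingHom.ker (limProj hI N₀)) :=
    hJB.of_mem_nhds ((limTopology_mem_nhds_zero_iff hI _).2 ⟨N₀, subset_rfl⟩)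
      ⟨1, by simpa using hN₀⟩
  obtain ⟨k, hk⟩ := ((hdef N₀).isAdicTopology h𝔞).exists_pow_le (h𝔞.pow_mem_nhds j)
  obtain ⟨M, hM⟩ := exists_ker_limProj_le hI (hB.pow_mem_nhds (k + 1))
  refine ⟨M, fun N => ?_⟩
  calc RingHom.ker (limProj hI M)
      ≤ RingHom.ker (limProj hI N₀) ^ (k + 1) := hM
    _ ≤ (Ideal.map (toLim A I hI) (I N₀) ⊔ RingHom.ker (limProj hI (max N₀ N))) ^ (k + 1) :=
      Ideal.pow_right_mono (ker_limProj_le_map_sup hI (le_max_left _ _)) _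
    _ ≤ Ideal.map (toLim A I hI) (I N₀) ^ k ⊔ RingHom.ker (limProj hI (max N₀ N)) := by
      simpa using Ideal.sup_pow_add_le_pow_sup_pow (I := Ideal.map (toLim A I hI) (I N₀))
        (J := RingHom.ker (limProj hI (max N₀ N))) (n := k) (m := 1)
    _ ≤ Ideal.map (toLim A I hI) (𝔞 ^ j) ⊔ RingHom.ker (limProj hI N) := by
      rw [← Ideal.map_pow]
      exact sup_le_sup (Ideal.map_mono hk) (ker_limProj_antitone hI (le_max_right _ _))

theorem exists_toLim_eq_of_sub_mem_ker {𝔞 : Ideal A} [IsPrecomplete 𝔞 A]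
    (hpow_le : ∀ N, ∃ m, 𝔞 ^ m ≤ I N) {M : ℕ → ℕ}
    (hM : ∀ j N, RingHom.ker (limProj hI (M j)) ≤
      Ideal.map (toLim A I hI) (𝔞 ^ j) ⊔ RingHom.ker (limProj hI N))
    {j : ℕ} {b : limSubring A I hI} {a : A}
    (hb : b - toLim A I hI a ∈ RingHom.ker (limProj hI (M j))) :
    ∃ a', a' - a ∈ 𝔞 ^ j ∧ toLim A I hI a' = b := by
  set φ := toLim A I hI
  obtain ⟨c, hc⟩ := exists_seq_of_forall_exists_succ
    (P := fun k c => b - φ c ∈ RingHom.ker (limProj hI (M (j + k))) ∧ c - a ∈ 𝔞 ^ j)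
    (R := fun k c c' => c' - c ∈ 𝔞 ^ (j + k)) ⟨hb, by simp⟩ fun k c ⟨hbc, hca⟩ => by
      obtain ⟨i, hi, hbi⟩ := exists_sub_mem_ker_of_mem_map_sup hI (hM (j + k) (M (j + k + 1)) hbc)
      refine ⟨c + i, ⟨?_, ?_⟩, by simpa using hi⟩
      · rw [← add_assoc, map_add, ← sub_sub]
        exact hbi
      · simpa [add_sub_right_comm] using
          add_mem hca (Ideal.pow_le_pow_right (Nat.le_add_right j k) hi)
  obtain ⟨L, hL⟩ := IsPrecomplete.prec ‹_› ((AdicCompletion.isAdicCauchy_iff 𝔞 A c).2 fun k =>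
    smodEq_pow_smul_top_iff.2 (by
      simpa using neg_mem (Ideal.pow_le_pow_right (Nat.le_add_left k j) (hc k).2)))
  refine ⟨L, ?_, ?_⟩
  · simpa using sub_mem (hc j).1.2 (smodEq_pow_smul_top_iff.1 (hL j))
  · rw [eq_comm, ← sub_eq_zero]
    refine eq_zero_of_forall_limProj_eq_zero hI fun N => ?_
    obtain ⟨m, hm⟩ := hpow_le N
    have h₁ : b - φ (c m) ∈ RingHom.ker (limProj hI N) :=
      sup_le (Ideal.map_mono ((Ideal.pow_le_pow_right (Nat.le_add_left m j)).trans hm) |>.trans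
        (map_toLim_le_ker_limProj hI N)) le_rfl (hM _ N (hc m).1.1)
    have h₂ : φ (c m - L) ∈ RingHom.ker (limProj hI N) := map_toLim_le_ker_limProj hI N
      (Ideal.mem_map_of_mem φ (hm (smodEq_pow_smul_top_iff.1 (hL m))))
    simpa using add_mem h₁ h₂

end InverseLimit

/-- Let `A` be a Noetherian adic ring and `Iᵢ` a descending chain of ideals of definition,
`B = varprojlim A/Iᵢ`. If `B` is adic, then `A → B` is surjective and the topology of `B` is
the `{I₁ⁿB}`-topology. -/
theorem stmt_6 (A : Type*) [CommRing A] [TopologicalSpace A]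
    (hA : IsAdmissible A) (hnoeth : IsNoetherianRing A)
    (hadic : ∃ J : Ideal A, IsAdicTopology A J)
    (I : ℕ → Ideal A) (hdesc : ∀ i, I (i + 1) ≤ I i)
    (hdef : ∀ i, IsIdealOfDefinition A (I i)) :
    letI := limTopology A I hdesc
    (∃ JB : Ideal (limSubring A I hdesc), IsAdicTopology (limSubring A I hdesc) JB) →
      Function.Surjective (toLim A I hdesc) ∧
      IsAdicTopology (limSubring A I hdesc) (Ideal.map (toLim A I hdesc) (I 0)) := by
  let _ := limTopology A I hdesc
  rintro ⟨JB, hJB⟩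
  obtain ⟨J, hJ⟩ := hadic
  have h𝔞 : IsAdicTopology A (I 0) := (hdef 0).isAdicTopology hJ
  have := hA.isPrecomplete h𝔞
  have hpow_le (N : ℕ) : ∃ m, I 0 ^ m ≤ I N :=
    h𝔞.exists_pow_le ((hdef N).1.mem_nhds (I N).zero_mem)
  choose M hM using exists_ker_limProj_le_map_pow_sup hdesc h𝔞 hdef hJB
  refine ⟨fun b => ?_, isAdicTopology_of_basis (limTopology_mem_nhds_zero_iff hdesc)
    (fun N => ?_) (fun n => ⟨M n, fun b hb => ?_⟩)⟩
  · obtain ⟨a, ha⟩ := Ideal.Quotient.mk_surjective (limProj hdesc (M 0) b)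
    obtain ⟨a', -, ha'⟩ := exists_toLim_eq_of_sub_mem_ker hdesc hpow_le hM (b := b) (a := a)
      (by rw [RingHom.mem_ker, map_sub, limProj_toLim, ha, sub_self])
    exact ⟨a', ha'⟩
  · obtain ⟨m, hm⟩ := hpow_le N
    refine ⟨m, ?_⟩
    rw [← Ideal.map_pow]
    exact (Ideal.map_mono hm).trans (map_toLim_le_ker_limProj hdesc N)
  · obtain ⟨a', ha', rfl⟩ := exists_toLim_eq_of_sub_mem_ker hdesc hpow_le hM (a := 0)
      (by simpa using hb)
    rw [← Ideal.map_pow]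
    exact Ideal.mem_map_of_mem _ (by simpa using ha')
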